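/- arXiv:2604.15098 — 2 statements merged into one kernel-verified Lean document; each statement's English description precedes it below -/
import Mathlib

section
/- Let X, Y, X′, Y′ be nonempty connected open subsets of ℂ, and let φ : X × Y → X′ × Y′ be a holomorphic bijection whose inverse is holomorphic. Assume that every holomorphic map from Y to ℂ taking values in X′ is constant. Then there exists a holomorphic map φ₁ : X → X′ such that the first coordinate of φ(x,y) equals φ₁(x) for all (x,y) ∈ X × Y. If, in addition, every holomorphic map from Y′ to ℂ taking values in X is constant, then φ₁ is a bijection from X onto X′ with holomorphic inverse. -/
/-- Let `X, Y, X′, Y′` be nonempty connected open subsets of `ℂ` and let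
`φ : X × Y → X′ × Y′` be a holomorphic bijection with holomorphic inverse `ψ`.
If every holomorphic map `Y → ℂ` with values in `X′` is constant, then the first
coordinate of `φ` depends only on the first variable: it is induced by a holomorphic
map `φ₁ : X → X′`.  If moreover every holomorphic map `Y′ → ℂ` with values in `X`
is constant, then `φ₁` is a bijection of `X` onto `X′` with holomorphic inverse. -/
theorem descend_first_factor (X Y X' Y' : Set ℂ)
    (hXo : IsOpen X) (hYo : IsOpen Y) (hX'o : IsOpen X') (hY'o : IsOpen Y')
    (hXc : IsConnected X) (hYc : IsConnected Y)
    (hX'c : IsConnected X') (hY'c : IsConnected Y')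
    (φ ψ : ℂ × ℂ → ℂ × ℂ)
    (hφ : DifferentiableOn ℂ φ (X ×ˢ Y))
    (hψ : DifferentiableOn ℂ ψ (X' ×ˢ Y'))
    (hbij : Set.BijOn φ (X ×ˢ Y) (X' ×ˢ Y'))
    (hinv : Set.InvOn ψ φ (X ×ˢ Y) (X' ×ˢ Y'))
    (hconst : ∀ f : ℂ → ℂ, DifferentiableOn ℂ f Y → (∀ y ∈ Y, f y ∈ X') →
      ∃ c, ∀ y ∈ Y, f y = c) :
    ∃ φ₁ : ℂ → ℂ,
      DifferentiableOn ℂ φ₁ X ∧ (∀ x ∈ X, φ₁ x ∈ X') ∧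
      (∀ x ∈ X, ∀ y ∈ Y, (φ (x, y)).1 = φ₁ x) ∧
      ((∀ f : ℂ → ℂ, DifferentiableOn ℂ f Y' → (∀ y ∈ Y', f y ∈ X) →
          ∃ c, ∀ y ∈ Y', f y = c) →
        Set.BijOn φ₁ X X' ∧
        ∃ ψ₁ : ℂ → ℂ, DifferentiableOn ℂ ψ₁ X' ∧ Set.InvOn ψ₁ φ₁ X X') := by
  obtain ⟨y₀, hy₀⟩ := hYc.nonempty
  obtain ⟨y₀', hy₀'⟩ := hY'c.nonempty
  set φ₁ : ℂ → ℂ := fun x => (φ (x, y₀)).1 with hφ₁def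
  -- ψ maps X'×Y' into X×Y
  have hψmaps : Set.MapsTo ψ (X' ×ˢ Y') (X ×ˢ Y) := by
    intro p hp
    obtain ⟨q, hq, hφq⟩ := hbij.surjOn hp
    rw [← hφq, hinv.1 hq]
    exact hq
  have hφ₁diff : DifferentiableOn ℂ φ₁ X := by
    apply DifferentiableOn.fst
    exact hφ.comp ((differentiable_id.prodMk (differentiable_const y₀)).differentiableOn)
      (fun x hx => Set.mk_mem_prod hx hy₀)
  have hφ₁mem : ∀ x ∈ X, φ₁ x ∈ X' := fun x hx => (hbij.mapsTo (Set.mk_mem_prod hx hy₀)).1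
  have key : ∀ x ∈ X, ∀ y ∈ Y, (φ (x, y)).1 = φ₁ x := by
    intro x hx
    have hf : DifferentiableOn ℂ (fun y => (φ (x, y)).1) Y := by
      apply DifferentiableOn.fst
      exact hφ.comp (((differentiable_const x).prodMk differentiable_id).differentiableOn)
        (fun y hy => Set.mk_mem_prod hx hy)
    obtain ⟨c, hc⟩ := hconst _ hf
      (fun y hy => (hbij.mapsTo (Set.mk_mem_prod hx hy)).1)
    intro y hy
    rw [hc y hy, ← hc y₀ hy₀]
  refine ⟨φ₁, hφ₁diff, hφ₁mem, key, ?_⟩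
  intro hconst'
  set ψ₁ : ℂ → ℂ := fun x => (ψ (x, y₀')).1 with hψ₁def
  have hψ₁diff : DifferentiableOn ℂ ψ₁ X' := by
    apply DifferentiableOn.fst
    exact hψ.comp ((differentiable_id.prodMk (differentiable_const y₀')).differentiableOn)
      (fun x hx => Set.mk_mem_prod hx hy₀')
  have hψ₁mem : ∀ x ∈ X', ψ₁ x ∈ X := fun x hx => (hψmaps (Set.mk_mem_prod hx hy₀')).1
  have key' : ∀ x ∈ X', ∀ y ∈ Y', (ψ (x, y)).1 = ψ₁ x := by
    intro x hx
    have hf : DifferentiableOn ℂ (fun y => (ψ (x, y)).1) Y' := by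
      apply DifferentiableOn.fst
      exact hψ.comp (((differentiable_const x).prodMk differentiable_id).differentiableOn)
        (fun y hy => Set.mk_mem_prod hx hy)
    obtain ⟨c, hc⟩ := hconst' _ hf
      (fun y hy => (hψmaps (Set.mk_mem_prod hx hy)).1)
    intro y hy
    rw [hc y hy, ← hc y₀' hy₀']
  -- left inverse: ψ₁ (φ₁ x) = x on X
  have hleft : ∀ x ∈ X, ψ₁ (φ₁ x) = x := by
    intro x hx
    have hp : φ (x, y₀) ∈ X' ×ˢ Y' := hbij.mapsTo (Set.mk_mem_prod hx hy₀)
    have h1 := key' _ hp.1 _ hp.2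
    have h2 : ((φ (x, y₀)).1, (φ (x, y₀)).2) = φ (x, y₀) := rfl
    rw [h2] at h1
    rw [← h1, hinv.1 (Set.mk_mem_prod hx hy₀)]
  -- right inverse: φ₁ (ψ₁ x') = x' on X'
  have hright : ∀ x' ∈ X', φ₁ (ψ₁ x') = x' := by
    intro x' hx'
    have hp : (x', y₀') ∈ X' ×ˢ Y' := Set.mk_mem_prod hx' hy₀'
    have hq := hψmaps hp
    have h1 := key _ hq.1 _ hq.2
    have h2 : ((ψ (x', y₀')).1, (ψ (x', y₀')).2) = ψ (x', y₀') := rfl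
    rw [h2] at h1
    have h3 : φ (ψ (x', y₀')) = (x', y₀') := hinv.2 hp
    have : (φ (ψ (x', y₀'))).1 = x' := by rw [h3]
    rw [h1] at this
    exact this
  constructor
  · refine ⟨hφ₁mem, ?_, ?_⟩
    · intro a ha b hb hab
      rw [← hleft a ha, ← hleft b hb, hab]
    · intro x' hx'
      exact ⟨ψ₁ x', hψ₁mem x' hx', hright x' hx'⟩
  · exact ⟨ψ₁, hψ₁diff, hleft, hright⟩
end

section
/- Let X, Y, X′, Y′ be nonempty connected open subsets of ℂ, and let φ : X × Y → X′ × Y′ be a holomorphic bijection whose inverse is holomorphic. Assume that every holomorphic map from Y to ℂ taking values in X′ is constant, and that every holomorphic map from Y′ to ℂ taking values in X is constant. Then for every (x,y) ∈ X × Y, the (complex) derivative Dφ(x,y) : ℂ² → ℂ² maps the vertical subspace {0} × ℂ bijectively onto the vertical subspace {0} × ℂ; equivalently, the partial derivative of the first component of φ with respect to the second variable vanishes identically, and the partial derivative of the second component of φ with respect to the second variable is nowhere zero. -/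
/-- Let `X, Y, X′, Y′` be nonempty connected open subsets of `ℂ` and let
`φ : X × Y → X′ × Y′` be a holomorphic bijection with holomorphic inverse `ψ`.
Assume every holomorphic map `Y → ℂ` with values in `X′` is constant, and every
holomorphic map `Y′ → ℂ` with values in `X` is constant.  Then at every point of
`X × Y` the derivative `Dφ` maps the vertical subspace `{0} × ℂ` bijectively onto
the vertical subspace `{0} × ℂ`; equivalently, the partial derivative of the first
component of `φ` in the second variable vanishes, and the partial derivative of the
second component of `φ` in the second variable is nowhere zero. -/
theorem preserves_vertical_distribution (X Y X' Y' : Set ℂ)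
    (hXo : IsOpen X) (hYo : IsOpen Y) (hX'o : IsOpen X') (hY'o : IsOpen Y')
    (hXc : IsConnected X) (hYc : IsConnected Y)
    (hX'c : IsConnected X') (hY'c : IsConnected Y')
    (φ ψ : ℂ × ℂ → ℂ × ℂ)
    (hφ : DifferentiableOn ℂ φ (X ×ˢ Y))
    (hψ : DifferentiableOn ℂ ψ (X' ×ˢ Y'))
    (hbij : Set.BijOn φ (X ×ˢ Y) (X' ×ˢ Y'))
    (hinv : Set.InvOn ψ φ (X ×ˢ Y) (X' ×ˢ Y'))
    (hconst : ∀ f : ℂ → ℂ, DifferentiableOn ℂ f Y → (∀ y ∈ Y, f y ∈ X') →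
      ∃ c, ∀ y ∈ Y, f y = c)
    (hconst' : ∀ f : ℂ → ℂ, DifferentiableOn ℂ f Y' → (∀ y ∈ Y', f y ∈ X) →
      ∃ c, ∀ y ∈ Y', f y = c) :
    ∀ p ∈ X ×ˢ Y,
      (fderiv ℂ φ p (0, 1)).1 = 0 ∧
      (fderiv ℂ φ p (0, 1)).2 ≠ 0 ∧
      Set.BijOn (fun u : ℂ × ℂ => fderiv ℂ φ p u)
        (({0} : Set ℂ) ×ˢ (Set.univ : Set ℂ))
        (({0} : Set ℂ) ×ˢ (Set.univ : Set ℂ)) := by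
  rintro ⟨x, y⟩ ⟨hx, hy⟩
  have hso : IsOpen (X ×ˢ Y) := hXo.prod hYo
  have hp : ((x, y) : ℂ × ℂ) ∈ X ×ˢ Y := ⟨hx, hy⟩
  have hφp : DifferentiableAt ℂ φ (x, y) := hφ.differentiableAt (hso.mem_nhds hp)
  -- the vertical inclusion t ↦ (x, t)
  have hg : ∀ t : ℂ, HasFDerivAt (fun t : ℂ => ((x : ℂ), t))
      (((0 : ℂ →L[ℂ] ℂ)).prod (ContinuousLinearMap.id ℂ ℂ)) t := fun t =>
    HasFDerivAt.prodMk (hasFDerivAt_const x t) (hasFDerivAt_id t)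
  -- first coordinate of φ along the vertical line is constant
  have hfd : DifferentiableOn ℂ (fun t => (φ (x, t)).1) Y := by
    intro t ht
    have hφt : DifferentiableAt ℂ φ (x, t) :=
      hφ.differentiableAt (hso.mem_nhds (show ((x, t) : ℂ × ℂ) ∈ X ×ˢ Y from ⟨hx, ht⟩))
    exact ((hφt.comp t (hg t).differentiableAt).fst).differentiableWithinAt
  have hmem : ∀ t ∈ Y, (φ (x, t)).1 ∈ X' := fun t ht => (hbij.mapsTo (show ((x, t) : ℂ × ℂ) ∈ X ×ˢ Y from ⟨hx, ht⟩)).1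
  obtain ⟨c, hc⟩ := hconst _ hfd hmem
  have h1 : HasFDerivAt (fun t => (φ (x, t)).1)
      ((ContinuousLinearMap.fst ℂ ℂ ℂ).comp
        ((fderiv ℂ φ (x, y)).comp
          (((0 : ℂ →L[ℂ] ℂ)).prod (ContinuousLinearMap.id ℂ ℂ)))) y :=
    (hφp.hasFDerivAt.comp y (hg y)).fst
  have h2 : HasFDerivAt (fun t => (φ (x, t)).1) (0 : ℂ →L[ℂ] ℂ) y := by
    have heq : (fun t => (φ (x, t)).1) =ᶠ[nhds y] fun _ => c :=
      Filter.eventuallyEq_of_mem (hYo.mem_nhds hy) hc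
    exact (hasFDerivAt_const c y).congr_of_eventuallyEq heq
  have hzero : (fderiv ℂ φ (x, y) (0, 1)).1 = 0 := by
    have huniq := h1.unique h2
    have := congrArg (fun L : ℂ →L[ℂ] ℂ => L 1) huniq
    simpa using this
  -- injectivity of the derivative via the inverse
  have hφpmem : φ (x, y) ∈ X' ×ˢ Y' := hbij.mapsTo hp
  have hψp : DifferentiableAt ℂ ψ (φ (x, y)) :=
    hψ.differentiableAt ((hX'o.prod hY'o).mem_nhds hφpmem)
  have hcomp : HasFDerivAt (ψ ∘ φ)
      ((fderiv ℂ ψ (φ (x, y))).comp (fderiv ℂ φ (x, y))) (x, y) :=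
    hψp.hasFDerivAt.comp _ hφp.hasFDerivAt
  have hid : HasFDerivAt (ψ ∘ φ) (ContinuousLinearMap.id ℂ (ℂ × ℂ)) (x, y) := by
    have heq : (ψ ∘ φ) =ᶠ[nhds (x, y)] id :=
      Filter.eventuallyEq_of_mem (hso.mem_nhds hp) (fun q hq => hinv.1 hq)
    exact (hasFDerivAt_id _).congr_of_eventuallyEq heq
  have hinj : Function.Injective (fderiv ℂ φ (x, y)) := by
    have huniq := hcomp.unique hid
    have hli : ∀ u, (fderiv ℂ ψ (φ (x, y))) ((fderiv ℂ φ (x, y)) u) = u := fun u => by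
      have := congrArg (fun L : ℂ × ℂ →L[ℂ] ℂ × ℂ => L u) huniq
      simpa using this
    exact Function.LeftInverse.injective hli
  set A := fderiv ℂ φ (x, y) with hA
  have hA01 : A (0, 1) ≠ 0 := by
    intro h0
    have : ((0 : ℂ), (1 : ℂ)) = 0 := hinj (by simp [h0])
    simp [Prod.ext_iff] at this
  have hd : (A (0, 1)).2 ≠ 0 := by
    intro h2'
    exact hA01 (Prod.ext hzero h2')
  have hsmul : ∀ t : ℂ, A (0, t) = t • A (0, 1) := by
    intro t
    have : ((0 : ℂ), t) = t • ((0 : ℂ), (1 : ℂ)) := by simp [Prod.ext_iff]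
    rw [this, map_smul]
  refine ⟨hzero, hd, ?_, ?_, ?_⟩
  · rintro ⟨u1, u2⟩ ⟨hu1, -⟩
    have hu1' : u1 = 0 := hu1
    subst hu1'
    refine ⟨?_, trivial⟩
    show (A (0, u2)).1 ∈ ({0} : Set ℂ)
    rw [hsmul u2]
    simp [hzero]
  · exact hinj.injOn
  · rintro ⟨v1, v2⟩ ⟨hv1, -⟩
    have hv1' : v1 = 0 := hv1
    subst hv1'
    refine ⟨(0, v2 / (A (0, 1)).2), ⟨rfl, trivial⟩, ?_⟩
    show A (0, v2 / (A (0, 1)).2) = (0, v2)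
    rw [hsmul]
    ext
    · simp [hzero]
    · simp [div_mul_cancel₀ _ hd, smul_eq_mul]
end
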